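/- arXiv:2511.14151 — 2 statements merged into one kernel-verified Lean document; each statement's English description precedes it below -/
import Mathlib

section
/- Let d, n ≥ 1 and σ > 0. Suppose q_i, p_i : I → ℝ^d (i = 1,…,n) are differentiable on an open interval I ⊆ ℝ and satisfy the landmark Hamiltonian equations q_i'(t) = ∑_{j=1}^n exp(−‖q_i(t) − q_j(t)‖²/(2σ²)) p_j(t) and p_i'(t) = (1/σ²) ∑_{j=1}^n exp(−‖q_i(t) − q_j(t)‖²/(2σ²)) ⟨p_i(t), p_j(t)⟩ (q_i(t) − q_j(t)). Then the angular momentum matrix μ_A(t) = ∑_{i=1}^n ( p_i(t) q_i(t)ᵀ − q_i(t) p_i(t)ᵀ ), i.e. the d×d matrix with entries ∑_i (p_i(t)_a q_i(t)_b − q_i(t)_a p_i(t)_b), is constant on I. -/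
open Matrix

/-!
The angular momentum `μ(q, p) = ∑ᵢ (pᵢ qᵢᵀ − qᵢ pᵢᵀ)` is bilinear, so along the flow
`μ' = μ(q', p) + μ(q, p')`. Here `q'ᵢ = ∑ⱼ Kᵢⱼ pⱼ` and `p'ᵢ = ∑ⱼ Wᵢⱼ (qᵢ − qⱼ)` with
`Kᵢⱼ = k_σ(qᵢ, qⱼ)` and `Wᵢⱼ = σ⁻² Kᵢⱼ ⟨pᵢ, pⱼ⟩`, both symmetric in `(i, j)`. Hence each of the
two terms is a double sum whose summand is antisymmetric in `(i, j)`, and vanishes.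
-/

theorem Finset.sum_sum_eq_zero_of_antisymm {ι M : Type*} [AddCommGroup M] [IsAddTorsionFree M]
    (s : Finset ι) (f : ι → ι → M) (hf : ∀ i j, f j i = -f i j) :
    ∑ i ∈ s, ∑ j ∈ s, f i j = 0 := by
  refine self_eq_neg.mp ?_
  calc ∑ i ∈ s, ∑ j ∈ s, f i j = ∑ i ∈ s, ∑ j ∈ s, f j i := Finset.sum_comm
    _ = ∑ i ∈ s, ∑ j ∈ s, -f i j := sum_congr rfl fun i _ ↦ sum_congr rfl fun j _ ↦ hf i j
    _ = -∑ i ∈ s, ∑ j ∈ s, f i j := by simp only [sum_neg_distrib]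

-- `Matrix` carries no norm, so matrix-valued maps are differentiated in `m → k → 𝕜`.
theorem HasDerivAt.vecMulVec {𝕜 m k : Type*} [NontriviallyNormedField 𝕜] [Fintype m]
    [Fintype k] {x : 𝕜 → m → 𝕜} {y : 𝕜 → k → 𝕜} {x' : m → 𝕜} {y' : k → 𝕜} {t : 𝕜}
    (hx : HasDerivAt x x' t) (hy : HasDerivAt y y' t) :
    HasDerivAt (fun t ↦ of.symm (vecMulVec (x t) (y t)))
      (of.symm (vecMulVec x' (y t) + vecMulVec (x t) y')) t := by
  refine hasDerivAt_pi.2 fun a ↦ hasDerivAt_pi.2 fun b ↦ ?_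
  simpa only [vecMulVec_apply, of_symm_apply, Matrix.add_apply] using
    (hasDerivAt_pi.1 hx a).fun_mul (hasDerivAt_pi.1 hy b)

namespace Matrix

variable {ι m k R : Type*}

instance [AddMonoid R] [IsAddTorsionFree R] : IsAddTorsionFree (Matrix m k R) :=
  inferInstanceAs (IsAddTorsionFree (m → k → R))

variable [CommSemiring R]

theorem vecMulVec_sum (s : Finset ι) (w : m → R) (v : ι → k → R) :
    vecMulVec w (∑ i ∈ s, v i) = ∑ i ∈ s, vecMulVec w (v i) :=
  map_sum (vecMulVecBilin R R w) v s

theorem sum_vecMulVec (s : Finset ι) (w : ι → m → R) (v : k → R) :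
    vecMulVec (∑ i ∈ s, w i) v = ∑ i ∈ s, vecMulVec (w i) v :=
  map_sum ((vecMulVecBilin R R).flip v) w s

end Matrix

noncomputable def gaussianKernel {m : Type*} [Fintype m] (σ : ℝ) (x y : m → ℝ) : ℝ :=
  Real.exp (-((x - y) ⬝ᵥ (x - y)) / (2 * σ ^ 2))

theorem gaussianKernel_comm {m : Type*} [Fintype m] (σ : ℝ) (x y : m → ℝ) :
    gaussianKernel σ x y = gaussianKernel σ y x := by
  rw [gaussianKernel, gaussianKernel, ← neg_sub y x, neg_dotProduct_neg]

section AngularMomentum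

variable {ι m R : Type*} [Fintype ι] [CommRing R]

def angularMomentum (q p : ι → m → R) : Matrix m m R :=
  ∑ i, (vecMulVec (p i) (q i) - vecMulVec (q i) (p i))

theorem angularMomentum_sum_smul_left_eq_zero [IsAddTorsionFree R] (K : ι → ι → R)
    (hK : ∀ i j, K i j = K j i) (p : ι → m → R) :
    angularMomentum (fun i ↦ ∑ j, K i j • p j) p = 0 := by
  refine Eq.trans ?_ (Finset.sum_sum_eq_zero_of_antisymm .univ
    (fun i j ↦ K i j • (vecMulVec (p i) (p j) - vecMulVec (p j) (p i))) fun i j ↦ ?_)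
  · simp only [angularMomentum, vecMulVec_sum, sum_vecMulVec, vecMulVec_smul, smul_vecMulVec,
      ← Finset.sum_sub_distrib, smul_sub]
  · rw [hK, ← smul_neg, neg_sub]

theorem angularMomentum_sum_smul_sub_right_eq_zero [IsAddTorsionFree R] (W : ι → ι → R)
    (hW : ∀ i j, W i j = W j i) (q : ι → m → R) :
    angularMomentum q (fun i ↦ ∑ j, W i j • (q i - q j)) = 0 := by
  refine Eq.trans ?_ (Finset.sum_sum_eq_zero_of_antisymm .univ
    (fun i j ↦ W i j • (vecMulVec (q i) (q j) - vecMulVec (q j) (q i))) fun i j ↦ ?_)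
  · simp only [angularMomentum, vecMulVec_sum, sum_vecMulVec, vecMulVec_smul, smul_vecMulVec,
      sub_vecMulVec, vecMulVec_sub]
    refine Fintype.sum_congr _ _ fun i ↦ ?_
    rw [← Finset.sum_sub_distrib]
    refine Fintype.sum_congr _ _ fun j ↦ ?_
    module
  · rw [hW, ← smul_neg, neg_sub]

end AngularMomentum

theorem HasDerivAt.angularMomentum {𝕜 ι m : Type*} [NontriviallyNormedField 𝕜] [Fintype ι]
    [Fintype m] {q p : ι → 𝕜 → m → 𝕜} {q' p' : ι → m → 𝕜} {t : 𝕜}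
    (hq : ∀ i, HasDerivAt (q i) (q' i) t) (hp : ∀ i, HasDerivAt (p i) (p' i) t) :
    HasDerivAt (fun t ↦ of.symm (angularMomentum (q · t) (p · t)))
      (of.symm (angularMomentum q' (p · t) + angularMomentum (q · t) p')) t := by
  refine (HasDerivAt.fun_sum (u := .univ) fun i _ ↦
    ((hp i).vecMulVec (hq i)).sub ((hq i).vecMulVec (hp i))).congr_deriv ?_
  ext a b
  simp only [_root_.angularMomentum, of_symm_apply, Matrix.add_apply, Matrix.sum_apply,
    Matrix.sub_apply, Finset.sum_apply, Pi.sub_apply, ← Finset.sum_add_distrib]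
  exact Fintype.sum_congr _ _ fun _ ↦ by ring

theorem angular_momentum_conserved_general {d n : ℕ}
    (σ : ℝ) (a b : ℝ)
    (q p : Fin n → ℝ → (Fin d → ℝ))
    (hq : ∀ t ∈ Set.Ioo a b, ∀ i, HasDerivAt (q i)
      (∑ j, Real.exp (-((q i t - q j t) ⬝ᵥ (q i t - q j t)) / (2 * σ ^ 2)) • p j t) t)
    (hp : ∀ t ∈ Set.Ioo a b, ∀ i, HasDerivAt (p i)
      ((1 / σ ^ 2) • ∑ j,
        (Real.exp (-((q i t - q j t) ⬝ᵥ (q i t - q j t)) / (2 * σ ^ 2))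
          * (p i t ⬝ᵥ p j t)) • (q i t - q j t)) t) :
    ∀ t ∈ Set.Ioo a b, ∀ s ∈ Set.Ioo a b,
      (∑ i, (vecMulVec (p i t) (q i t) - vecMulVec (q i t) (p i t)))
        = ∑ i, (vecMulVec (p i s) (q i s) - vecMulVec (q i s) (p i s)) := by
  intro t ht s hs
  have hderiv : ∀ u ∈ Set.Ioo a b,
      HasDerivAt (fun u ↦ of.symm (angularMomentum (q · u) (p · u))) 0 u := by
    intro u hu
    have hq' : ∀ i, HasDerivAt (q i) (∑ j, gaussianKernel σ (q i u) (q j u) • p j u) u :=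
      hq u hu
    have hp' : ∀ i, HasDerivAt (p i) (∑ j, ((1 / σ ^ 2) *
        (gaussianKernel σ (q i u) (q j u) * (p i u ⬝ᵥ p j u))) • (q i u - q j u)) u := fun i ↦
      (hp u hu i).congr_deriv (by simp only [Finset.smul_sum, smul_smul]; rfl)
    have h := HasDerivAt.angularMomentum hq' hp'
    rwa [angularMomentum_sum_smul_left_eq_zero _ fun i j ↦ gaussianKernel_comm σ _ _,
      angularMomentum_sum_smul_sub_right_eq_zero _ fun i j ↦ by
        rw [gaussianKernel_comm, dotProduct_comm], add_zero] at h
  exact isOpen_Ioo.is_const_of_deriv_eq_zero isPreconnected_Ioo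
    (fun u hu ↦ (hderiv u hu).differentiableAt.differentiableWithinAt)
    (fun u hu ↦ (hderiv u hu).deriv) ht hs

/-- Conservation of the angular momentum matrix `μ_A = ∑ᵢ (pᵢ qᵢᵀ − qᵢ pᵢᵀ)` along the
Hamiltonian flow of the landmark Hamiltonian
`H(q,p) = (1/2) ∑_{i,j} exp(−‖q_i − q_j‖²/(2σ²)) ⟨p_i, p_j⟩`. -/
theorem angular_momentum_conserved {d n : ℕ} (hd : 1 ≤ d) (hn : 1 ≤ n)
    (σ : ℝ) (hσ : 0 < σ) (a b : ℝ)
    (q p : Fin n → ℝ → (Fin d → ℝ))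
    (hq : ∀ t ∈ Set.Ioo a b, ∀ i, HasDerivAt (q i)
      (∑ j, Real.exp (-((q i t - q j t) ⬝ᵥ (q i t - q j t)) / (2 * σ ^ 2)) • p j t) t)
    (hp : ∀ t ∈ Set.Ioo a b, ∀ i, HasDerivAt (p i)
      ((1 / σ ^ 2) • ∑ j,
        (Real.exp (-((q i t - q j t) ⬝ᵥ (q i t - q j t)) / (2 * σ ^ 2))
          * (p i t ⬝ᵥ p j t)) • (q i t - q j t)) t) :
    ∀ t ∈ Set.Ioo a b, ∀ s ∈ Set.Ioo a b,
      (∑ i, (vecMulVec (p i t) (q i t) - vecMulVec (q i t) (p i t)))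
        = ∑ i, (vecMulVec (p i s) (q i s) - vecMulVec (q i s) (p i s)) :=
  angular_momentum_conserved_general σ a b q p hq hp
end

section
/- Let d, n ≥ 1, and let I ⊆ ℝ be an open interval. Let R : I → ℝ^{d×d} and T : I → ℝ^d be differentiable with R(t) invertible for every t ∈ I, let A : I → ℝ^{d×d} and τ : I → ℝ^d be functions, and let v : I × ℝ^d → ℝ^d. Suppose that for all t ∈ I: R'(t) = A(t) R(t), T'(t) = A(t) T(t) + τ(t), and that q_i : I → ℝ^d (i = 1,…,n) are differentiable with q_i'(t) = A(t) q_i(t) + τ(t) + v(t, q_i(t)). Define q̃_i(t) = R(t)⁻¹ ( q_i(t) − T(t) ). Then each q̃_i is differentiable on I and satisfies q̃_i'(t) = R(t)⁻¹ v(t, R(t) q̃_i(t) + T(t)) for all t ∈ I. -/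
/-!
The inverse of `R` moves with `(R⁻¹)' = -R⁻¹ R' R⁻¹ = -R⁻¹ A`. In the product rule for
`q̃ = R⁻¹ (q - T)` the term `-R⁻¹ A (q - T)` coming from `R⁻¹` cancels the term `R⁻¹ A (q - T)`
coming from `q' - T'`, the translations `τ` cancel inside `q' - T'`, and what remains is
`R⁻¹ v(t, q)` with `q = R q̃ + T`.
-/

open Matrix

section MatrixCalculus

variable {𝕜 : Type*} [NontriviallyNormedField 𝕜] {m n : Type*} [Fintype n] {t : 𝕜}

theorem Matrix.hasDerivAt_iff_hasDerivAt_entry {M : 𝕜 → Matrix m n 𝕜} {M' : Matrix m n 𝕜} :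
    HasDerivAt M M' t ↔ ∀ i j, HasDerivAt (fun s => M s i j) (M' i j) t :=
  hasDerivAt_pi.trans (forall_congr' fun _ => hasDerivAt_pi)

theorem HasDerivAt.matrix_mulVec {M : 𝕜 → Matrix m n 𝕜} {M' : Matrix m n 𝕜}
    {x : 𝕜 → n → 𝕜} {x' : n → 𝕜} (hM : HasDerivAt M M' t) (hx : HasDerivAt x x' t) :
    HasDerivAt (fun s => M s *ᵥ x s) (M' *ᵥ x t + M t *ᵥ x') t := by
  refine hasDerivAt_pi.2 fun i => ?_
  simp only [mulVec, dotProduct, Pi.add_apply, ← Finset.sum_add_distrib]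
  exact HasDerivAt.fun_sum fun j _ =>
    (hasDerivAt_iff_hasDerivAt_entry.1 hM i j).mul (hasDerivAt_pi.1 hx j)

open scoped Matrix.Norms.Operator in
theorem HasDerivAt.matrix_inv [CompleteSpace 𝕜] [DecidableEq n] {M : 𝕜 → Matrix n n 𝕜}
    {M' : Matrix n n 𝕜} (hM : HasDerivAt M M' t) (hMt : IsUnit (M t)) :
    HasDerivAt (fun s => (M s)⁻¹) (-((M t)⁻¹ * M' * (M t)⁻¹)) t := by
  have : HasSummableGeomSeries (Matrix n n 𝕜) :=
    @instHasSummableGeomSeriesOfCompleteSpace _ _ (FiniteDimensional.complete 𝕜 _)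
  obtain ⟨u, hu⟩ := hMt
  have hinv := (hasFDerivAt_ringInverse (𝕜 := 𝕜) u).comp_hasDerivAt_of_eq t hM hu
  rw [_root_.neg_apply, ContinuousLinearMap.mulLeftRight_apply, ← Ring.inverse_unit,
    hu, ← nonsing_inv_eq_ringInverse] at hinv
  simp only [Function.comp_def, ← nonsing_inv_eq_ringInverse] at hinv
  exact hinv

end MatrixCalculus

theorem decoupled_dynamic_general {d n : ℕ} (a b : ℝ)
    (R : ℝ → Matrix (Fin d) (Fin d) ℝ) (T : ℝ → (Fin d → ℝ))
    (A : ℝ → Matrix (Fin d) (Fin d) ℝ) (τ : ℝ → (Fin d → ℝ))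
    (v : ℝ → (Fin d → ℝ) → (Fin d → ℝ))
    (q : Fin n → ℝ → (Fin d → ℝ))
    (hRinv : ∀ t ∈ Set.Ioo a b, IsUnit (R t))
    (hR : ∀ t ∈ Set.Ioo a b, ∀ i j, HasDerivAt (fun s => R s i j) ((A t * R t) i j) t)
    (hT : ∀ t ∈ Set.Ioo a b, HasDerivAt T ((A t).mulVec (T t) + τ t) t)
    (hq : ∀ t ∈ Set.Ioo a b, ∀ i,
      HasDerivAt (q i) ((A t).mulVec (q i t) + τ t + v t (q i t)) t) :
    ∀ t ∈ Set.Ioo a b, ∀ i,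
      HasDerivAt (fun s => (R s)⁻¹.mulVec (q i s - T s))
        ((R t)⁻¹.mulVec (v t ((R t).mulVec ((R t)⁻¹.mulVec (q i t - T t)) + T t))) t := by
  intro t ht i
  have hRt : HasDerivAt R (A t * R t) t := hasDerivAt_iff_hasDerivAt_entry.2 (hR t ht)
  have hRRinv : R t * (R t)⁻¹ = 1 := mul_nonsing_inv _ ((isUnit_iff_isUnit_det _).1 (hRinv t ht))
  refine ((hRt.matrix_inv (hRinv t ht)).matrix_mulVec ((hq t ht i).sub (hT t ht))).congr_deriv ?_
  simp only [mulVec_mulVec, hRRinv, one_mulVec, sub_add_cancel, Matrix.mul_assoc, mul_one,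
    neg_mulVec, mulVec_add, mulVec_sub, Pi.sub_apply]
  abel

/-- The change of variable `q̃ = R⁻¹(q − T)` removes the contribution of the rigid motion
`(R,T)` from the trajectory of landmarks deformed jointly by an infinitesimal rigid motion
`(A(t), τ(t))` and a time-dependent vector field `v(t,·)`: the transformed landmarks satisfy
`q̃ᵢ'(t) = R(t)⁻¹ v(t, R(t) q̃ᵢ(t) + T(t))`. -/
theorem decoupled_dynamic {d n : ℕ} (hd : 1 ≤ d) (hn : 1 ≤ n) (a b : ℝ)
    (R : ℝ → Matrix (Fin d) (Fin d) ℝ) (T : ℝ → (Fin d → ℝ))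
    (A : ℝ → Matrix (Fin d) (Fin d) ℝ) (τ : ℝ → (Fin d → ℝ))
    (v : ℝ → (Fin d → ℝ) → (Fin d → ℝ))
    (q : Fin n → ℝ → (Fin d → ℝ))
    (hRinv : ∀ t ∈ Set.Ioo a b, IsUnit (R t))
    (hR : ∀ t ∈ Set.Ioo a b, ∀ i j, HasDerivAt (fun s => R s i j) ((A t * R t) i j) t)
    (hT : ∀ t ∈ Set.Ioo a b, HasDerivAt T ((A t).mulVec (T t) + τ t) t)
    (hq : ∀ t ∈ Set.Ioo a b, ∀ i,
      HasDerivAt (q i) ((A t).mulVec (q i t) + τ t + v t (q i t)) t) :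
    ∀ t ∈ Set.Ioo a b, ∀ i,
      HasDerivAt (fun s => (R s)⁻¹.mulVec (q i s - T s))
        ((R t)⁻¹.mulVec (v t ((R t).mulVec ((R t)⁻¹.mulVec (q i t - T t)) + T t))) t :=
  decoupled_dynamic_general a b R T A τ v q hRinv hR hT hq
end
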